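/- QSP parametrization stability: let H be an n×n Hermitian complex matrix with ‖H‖ ≤ 1, let K ≥ 1, let θ_k, s_k and θ̃_k, s̃_k (k = 0,…,K−1) be real numbers with |s_k − s̃_k| ≤ δ_s and |θ_k − θ̃_k| ≤ δ_θ for all k, and let ζ > 0 satisfy |θ_k| ≤ ζ and |s_k| ≤ ζ for all k. Starting from the same unit vector ψ₀ = ψ̃₀ ∈ ℂ^n, define ψ_{k+1} = exp(iθ_k·Ψ_k)·exp(s_k·[Ψ_k,H])·ψ_k with Ψ_k = ψ_kψ_k†, and ψ̃_{k+1} = exp(iθ̃_k·Ψ̃_k)·exp(s̃_k·[Ψ̃_k,H])·ψ̃_k with Ψ̃_k = ψ̃_kψ̃_k†. Then ‖ψ_K − ψ̃_K‖ ≤ (1/(3ζ))·(1 + 6ζ)^K·max(δ_s, δ_θ). -/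

import Mathlib

open scoped InnerProductSpace
open Matrix

noncomputable section

/-- The action of a matrix on a vector in `EuclideanSpace ℂ (Fin n)`. -/
def matApp {n : ℕ} (M : Matrix (Fin n) (Fin n) ℂ) (v : EuclideanSpace ℂ (Fin n)) :
    EuclideanSpace ℂ (Fin n) :=
  Matrix.toEuclideanLin M v

/-- The rank-one outer product `ψψ†`. -/
def outerProd {n : ℕ} (v : EuclideanSpace ℂ (Fin n)) : Matrix (Fin n) (Fin n) ℂ :=
  Matrix.of fun a b => v a * (starRingEnd ℂ) (v b)

/-! Both generators `iθΨ` and `s[Ψ, H]` are skew-adjoint, so every step is unitary and the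
states stay on the unit sphere. For skew-adjoint `X, Y` one has `‖exp X - exp Y‖ ≤ ‖X - Y‖`
(differentiate `t ↦ exp (tX) exp ((1-t)Y)`, whose derivative is `X - Y` conjugated by unitaries),
and `‖[Ψ, H]‖ ≤ ‖H‖` because `[Ψ, H] = ΨH(1-Ψ) - (1-Ψ)HΨ` has orthogonal pieces. Since
`‖ψψ† - φφ†‖ ≤ 2‖ψ - φ‖` for unit vectors, one step maps an error `e` to at most
`(1 + 6ζ) e + δ_s + δ_θ`, and the discrete Grönwall inequality sums these to
`(δ_s + δ_θ) ((1 + 6ζ)^K - 1) / (6ζ)`. -/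

open NormedSpace InnerProductSpace ContinuousLinearMap

section CStarAlgebra
variable {A : Type*} [NormedRing A] [StarRing A] [CStarRing A] [NormedAlgebra ℂ A]
  [StarModule ℂ A] [CompleteSpace A]

theorem norm_exp_sub_exp_le_of_mem_skewAdjoint {X Y : A} (hX : X ∈ skewAdjoint A)
    (hY : Y ∈ skewAdjoint A) : ‖exp X - exp Y‖ ≤ ‖X - Y‖ := by
  -- the lemmas on `exp` are stated for a `ℚ`-algebra structure: restrict the `ℂ`-one
  let _ : NormedAlgebra ℚ A := .restrictScalars ℚ ℂ A
  have hunitary (t : ℝ) {Z : A} (hZ : Z ∈ skewAdjoint A) : exp (t • Z) ∈ unitary A :=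
    exp_mem_unitary_of_mem_skewAdjoint (skewAdjoint.smul_mem t hZ)
  have hderiv (t : ℝ) : HasDerivAt (fun t : ℝ => exp (t • X) * exp ((1 - t) • Y))
      (exp (t • X) * (X - Y) * exp ((1 - t) • Y)) t := by
    have hY' := (hasDerivAt_exp_smul_const' Y (1 - t)).scomp t ((hasDerivAt_id t).const_sub 1)
    refine ((hasDerivAt_exp_smul_const X t).mul hY').congr_deriv ?_
    simp only [Function.comp_apply, neg_one_smul]
    noncomm_ring
  have := norm_image_sub_le_of_norm_deriv_le_segment_01' (C := ‖X - Y‖)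
    (fun t _ => (hderiv t).hasDerivWithinAt) fun t _ => by
      rw [CStarRing.norm_mul_mem_unitary _ (hunitary _ hY),
        CStarRing.norm_mem_unitary_mul _ (hunitary _ hX)]
  simpa using this

end CStarAlgebra

theorem norm_smul_sub_smul_le {𝕜 F : Type*} [NormedField 𝕜] [SeminormedAddCommGroup F]
    [NormedSpace 𝕜 F] (a b : 𝕜) (x y : F) :
    ‖a • x - b • y‖ ≤ ‖a - b‖ * ‖y‖ + ‖a‖ * ‖x - y‖ := by
  rw [show a • x - b • y = (a - b) • y + a • (x - y) by module, ← norm_smul, ← norm_smul]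
  exact norm_add_le _ _

theorem norm_commutator_sub_commutator_le {R : Type*} [SeminormedRing R] (a b h : R) :
    ‖(a * h - h * a) - (b * h - h * b)‖ ≤ 2 * ‖h‖ * ‖a - b‖ := by
  rw [show (a * h - h * a) - (b * h - h * b) = (a - b) * h - h * (a - b) by noncomm_ring]
  calc _ ≤ ‖a - b‖ * ‖h‖ + ‖h‖ * ‖a - b‖ :=
        (norm_sub_le _ _).trans (add_le_add (norm_mul_le _ _) (norm_mul_le _ _))
    _ = 2 * ‖h‖ * ‖a - b‖ := by ring

theorem mul_sub_mul_mem_skewAdjoint {R : Type*} [Ring R] [StarRing R] {a b : R}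
    (ha : IsSelfAdjoint a) (hb : IsSelfAdjoint b) : a * b - b * a ∈ skewAdjoint R := by
  rw [skewAdjoint.mem_iff, star_sub, star_mul, star_mul, ha.star_eq, hb.star_eq, neg_sub]

section InnerProductSpace
variable {𝕜 E : Type*} [RCLike 𝕜] [NormedAddCommGroup E] [InnerProductSpace 𝕜 E]

theorem norm_rankOne_self_sub_rankOne_self_le (v w : E) :
    ‖rankOne 𝕜 v v - rankOne 𝕜 w w‖ ≤ (‖v‖ + ‖w‖) * ‖v - w‖ := by
  have hsplit : rankOne 𝕜 v v - rankOne 𝕜 w w = rankOne 𝕜 (v - w) v + rankOne 𝕜 w (v - w) := by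
    simp only [map_sub, _root_.sub_apply]
    abel
  calc _ ≤ ‖v - w‖ * ‖v‖ + ‖w‖ * ‖v - w‖ := by
        rw [hsplit, ← norm_rankOne (𝕜 := 𝕜), ← norm_rankOne (𝕜 := 𝕜)]
        exact norm_add_le _ _
    _ = (‖v‖ + ‖w‖) * ‖v - w‖ := by ring

variable [CompleteSpace E]

theorem norm_apply_sub_apply_le_of_mem_unitary {U V : E →L[𝕜] E}
    (hU : U ∈ unitary (E →L[𝕜] E)) (x y : E) :
    ‖U x - V y‖ ≤ ‖x - y‖ + ‖U - V‖ * ‖y‖ := by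
  calc ‖U x - V y‖ = ‖U (x - y) + (U - V) y‖ := by
        rw [map_sub, _root_.sub_apply, sub_add_sub_cancel]
    _ ≤ ‖U (x - y)‖ + ‖(U - V) y‖ := norm_add_le _ _
    _ ≤ ‖x - y‖ + ‖U - V‖ * ‖y‖ := by
        rw [norm_map_of_mem_unitary hU]
        gcongr
        exact le_opNorm _ _

theorem IsStarProjection.norm_mul_sub_mul_le {P : E →L[𝕜] E} (hP : IsStarProjection P)
    (H : E →L[𝕜] E) : ‖P * H - H * P‖ ≤ ‖H‖ := by
  set Q := 1 - P
  have horth (x y : E) : ⟪P x, Q y⟫_𝕜 = 0 := by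
    rw [← adjoint_inner_right, ← star_eq_adjoint, hP.isSelfAdjoint.star_eq, ← mul_apply_eq_comp,
      hP.mul_one_sub_self, _root_.zero_apply, inner_zero_right]
  have hpyth (x y : E) : ‖P x + Q y‖ ^ 2 = ‖P x‖ ^ 2 + ‖Q y‖ ^ 2 := by
    simpa only [sq] using norm_add_sq_eq_norm_sq_add_norm_sq_of_inner_eq_zero _ _ (horth x y)
  have hnorm (x : E) : ‖x‖ ^ 2 = ‖P x‖ ^ 2 + ‖Q x‖ ^ 2 := by
    rw [← hpyth]; simp [Q]
  -- `P H - H P = P H Q - Q H P`, and the two terms have orthogonal ranges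
  have hsplit (w : E) : (P * H - H * P) w = P (H (Q w)) + Q (-H (P w)) := by
    simp only [Q, _root_.sub_apply, mul_apply_eq_comp, one_apply_eq_self, map_sub, map_neg]
    abel
  refine opNorm_le_bound _ (norm_nonneg _) fun w => ?_
  rw [hsplit]
  refine (pow_le_pow_iff_left₀ (norm_nonneg _) (by positivity) two_ne_zero).mp ?_
  calc ‖P (H (Q w)) + Q (-H (P w))‖ ^ 2 = ‖P (H (Q w))‖ ^ 2 + ‖Q (-H (P w))‖ ^ 2 := hpyth _ _
    _ ≤ ‖H (Q w)‖ ^ 2 + ‖H (P w)‖ ^ 2 := by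
        have := hnorm (H (Q w)); have := hnorm (-H (P w)); rw [norm_neg] at this
        nlinarith [sq_nonneg ‖Q (H (Q w))‖, sq_nonneg ‖P (-H (P w))‖]
    _ ≤ (‖H‖ * ‖Q w‖) ^ 2 + (‖H‖ * ‖P w‖) ^ 2 := by gcongr <;> exact le_opNorm _ _
    _ = (‖H‖ * ‖w‖) ^ 2 := by rw [mul_pow, mul_pow, mul_pow, hnorm w]; ring

end InnerProductSpace

section QSP
variable {E : Type*} [NormedAddCommGroup E] [InnerProductSpace ℂ E] [CompleteSpace E]

def qspStep (H : E →L[ℂ] E) (θ s : ℝ) (ψ : E) : E :=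
  exp ((Complex.I * θ) • rankOne ℂ ψ ψ) (exp ((s : ℂ) • (rankOne ℂ ψ ψ * H - H * rankOne ℂ ψ ψ)) ψ)

theorem isSelfAdjoint_rankOne_self (ψ : E) : IsSelfAdjoint (rankOne ℂ ψ ψ) :=
  (isSymmetric_rankOne_self ψ).isSelfAdjoint

theorem phase_mem_skewAdjoint (θ : ℝ) (ψ : E) :
    (Complex.I * θ) • rankOne ℂ ψ ψ ∈ skewAdjoint (E →L[ℂ] E) :=
  (isSelfAdjoint_rankOne_self ψ).smul_mem_skewAdjoint <| by
    simp [skewAdjoint.mem_iff, Complex.conj_I]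

theorem commutator_mem_skewAdjoint {H : E →L[ℂ] E} (hH : IsSelfAdjoint H) (s : ℝ) (ψ : E) :
    (s : ℂ) • (rankOne ℂ ψ ψ * H - H * rankOne ℂ ψ ψ) ∈ skewAdjoint (E →L[ℂ] E) := by
  rw [Complex.coe_smul]
  exact skewAdjoint.smul_mem s (mul_sub_mul_mem_skewAdjoint (isSelfAdjoint_rankOne_self ψ) hH)

theorem exp_mem_unitary_of_mem_skewAdjoint' {X : E →L[ℂ] E} (hX : X ∈ skewAdjoint (E →L[ℂ] E)) :
    exp X ∈ unitary (E →L[ℂ] E) :=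
  let _ : NormedAlgebra ℚ (E →L[ℂ] E) := .restrictScalars ℚ ℂ _
  exp_mem_unitary_of_mem_skewAdjoint hX

theorem norm_qspStep {H : E →L[ℂ] E} (hH : IsSelfAdjoint H) (θ s : ℝ) (ψ : E) :
    ‖qspStep H θ s ψ‖ = ‖ψ‖ := by
  rw [qspStep, norm_map_of_mem_unitary
      (exp_mem_unitary_of_mem_skewAdjoint' (phase_mem_skewAdjoint θ ψ)),
    norm_map_of_mem_unitary
      (exp_mem_unitary_of_mem_skewAdjoint' (commutator_mem_skewAdjoint hH s ψ))]

theorem norm_eq_norm_of_qsp_recursion {H : E →L[ℂ] E} (hH : IsSelfAdjoint H) {θ s : ℕ → ℝ}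
    {K : ℕ} {x : ℕ → E} (hx : ∀ k < K, x (k + 1) = qspStep H (θ k) (s k) (x k)) :
    ∀ k ≤ K, ‖x k‖ = ‖x 0‖ := by
  intro k
  induction k with
  | zero => simp
  | succ k ih => intro hk; rw [hx k hk, norm_qspStep hH, ih (k.le_succ.trans hk)]

theorem norm_exp_apply_sub_exp_apply_le {X Y : E →L[ℂ] E} (hX : X ∈ skewAdjoint (E →L[ℂ] E))
    (hY : Y ∈ skewAdjoint (E →L[ℂ] E)) (x y : E) :
    ‖exp X x - exp Y y‖ ≤ ‖x - y‖ + ‖X - Y‖ * ‖y‖ :=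
  (norm_apply_sub_apply_le_of_mem_unitary (exp_mem_unitary_of_mem_skewAdjoint' hX) x y).trans <| by
    gcongr
    exact norm_exp_sub_exp_le_of_mem_skewAdjoint hX hY

theorem norm_qspStep_sub_qspStep_le {H : E →L[ℂ] E} (hH : IsSelfAdjoint H) (hH1 : ‖H‖ ≤ 1)
    {ψ ψ' : E} (hψ : ‖ψ‖ = 1) (hψ' : ‖ψ'‖ = 1) (θ θ' s s' : ℝ) :
    ‖qspStep H θ s ψ - qspStep H θ' s' ψ'‖
      ≤ (1 + 2 * |θ| + 4 * |s|) * ‖ψ - ψ'‖ + |s - s'| + |θ - θ'| := by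
  set P := rankOne ℂ ψ ψ
  set P' := rankOne ℂ ψ' ψ'
  have hPP' : ‖P - P'‖ ≤ 2 * ‖ψ - ψ'‖ := by
    simpa [hψ, hψ', one_add_one_eq_two] using norm_rankOne_self_sub_rankOne_self_le (𝕜 := ℂ) ψ ψ'
  have hphase : ‖(Complex.I * θ) • P - (Complex.I * θ') • P'‖ ≤ |θ - θ'| + 2 * |θ| * ‖ψ - ψ'‖ := by
    refine (norm_smul_sub_smul_le _ _ _ _).trans ?_
    have hP' : ‖P'‖ ≤ 1 := by simp [P', hψ']
    rw [← mul_sub, norm_mul, norm_mul, Complex.norm_I, one_mul, one_mul, ← Complex.ofReal_sub,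
      Complex.norm_real, Complex.norm_real, Real.norm_eq_abs, Real.norm_eq_abs]
    calc _ ≤ |θ - θ'| * 1 + |θ| * (2 * ‖ψ - ψ'‖) := by gcongr
      _ = _ := by ring
  have hcomm : ‖(s : ℂ) • (P * H - H * P) - (s' : ℂ) • (P' * H - H * P')‖
      ≤ |s - s'| + 4 * |s| * ‖ψ - ψ'‖ := by
    refine (norm_smul_sub_smul_le _ _ _ _).trans ?_
    have hT' : ‖P' * H - H * P'‖ ≤ 1 :=
      ((isStarProjection_rankOne_self hψ').norm_mul_sub_mul_le H).trans hH1
    have hTT' : ‖(P * H - H * P) - (P' * H - H * P')‖ ≤ 4 * ‖ψ - ψ'‖ :=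
      (norm_commutator_sub_commutator_le P P' H).trans <| by
        nlinarith [norm_nonneg H, norm_nonneg (P - P')]
    rw [← Complex.ofReal_sub, Complex.norm_real, Complex.norm_real, Real.norm_eq_abs,
      Real.norm_eq_abs]
    calc _ ≤ |s - s'| * 1 + |s| * (4 * ‖ψ - ψ'‖) := by gcongr
      _ = _ := by ring
  have hinner := norm_exp_apply_sub_exp_apply_le (commutator_mem_skewAdjoint hH s ψ)
    (commutator_mem_skewAdjoint hH s' ψ') ψ ψ'
  have houter := norm_exp_apply_sub_exp_apply_le (phase_mem_skewAdjoint θ ψ)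
    (phase_mem_skewAdjoint θ' ψ') (exp ((s : ℂ) • (P * H - H * P)) ψ)
    (exp ((s' : ℂ) • (P' * H - H * P')) ψ')
  rw [norm_map_of_mem_unitary (exp_mem_unitary_of_mem_skewAdjoint'
    (commutator_mem_skewAdjoint hH s' ψ')), hψ'] at houter
  rw [hψ'] at hinner
  refine houter.trans ?_
  linarith

end QSP

section Matrix
variable {n : ℕ}

theorem toEuclideanCLM_outerProd (v : EuclideanSpace ℂ (Fin n)) :
    toEuclideanCLM (𝕜 := ℂ) (outerProd v) = rankOne ℂ v v := by
  refine ContinuousLinearMap.coe_injective ?_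
  rw [coe_toEuclideanCLM_eq_toEuclideanLin, ← LinearEquiv.eq_symm_apply,
    symm_toEuclideanLin_rankOne]
  ext a b
  simp [outerProd, vecMulVec_apply]

open scoped Matrix.Norms.L2Operator in
theorem toEuclideanCLM_exp (M : Matrix (Fin n) (Fin n) ℂ) :
    toEuclideanCLM (𝕜 := ℂ) (exp M) = exp (toEuclideanCLM (𝕜 := ℂ) M) :=
  let _ : NormedAlgebra ℚ (Matrix (Fin n) (Fin n) ℂ) := .restrictScalars ℚ ℂ _
  map_exp _ (AddMonoidHomClass.isometry_of_norm _ l2_opNorm_toEuclideanCLM).continuous M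

theorem matApp_exp (M : Matrix (Fin n) (Fin n) ℂ) (v : EuclideanSpace ℂ (Fin n)) :
    matApp (exp M) v = exp (toEuclideanCLM (𝕜 := ℂ) M) v := by
  rw [← toEuclideanCLM_exp]; rfl

theorem matApp_qsp_eq_qspStep (H : Matrix (Fin n) (Fin n) ℂ) (θ s : ℝ)
    (ψ : EuclideanSpace ℂ (Fin n)) :
    matApp (exp ((Complex.I * (θ : ℂ)) • outerProd ψ))
        (matApp (exp (((s : ℝ) : ℂ) • (outerProd ψ * H - H * outerProd ψ))) ψ)
      = qspStep (toEuclideanCLM (𝕜 := ℂ) H) θ s ψ := by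
  simp only [matApp_exp, map_smul, map_sub, map_mul, toEuclideanCLM_outerProd, qspStep]

end Matrix

theorem le_mul_geom_sum_of_le_mul_add {a : ℕ → ℝ} {c d : ℝ} {K : ℕ} (hc : 0 ≤ c) (h0 : a 0 ≤ 0)
    (h : ∀ k < K, a (k + 1) ≤ c * a k + d) : a K ≤ d * ∑ i ∈ Finset.range K, c ^ i := by
  suffices ∀ k ≤ K, a k ≤ d * ∑ i ∈ Finset.range k, c ^ i from this K le_rfl
  intro k
  induction k with
  | zero => simpa using h0
  | succ k ih =>
    intro hk
    calc a (k + 1) ≤ c * a k + d := h k hk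
      _ ≤ c * (d * ∑ i ∈ Finset.range k, c ^ i) + d := by gcongr; exact ih (k.le_succ.trans hk)
      _ = d * ∑ i ∈ Finset.range (k + 1), c ^ i := by rw [geom_sum_succ]; ring

theorem mul_geom_sum_one_add_le {ζ d m : ℝ} (hζ : 0 < ζ) (hm : 0 ≤ m) (hd : d ≤ 2 * m) (K : ℕ) :
    d * ∑ i ∈ Finset.range K, (1 + 6 * ζ) ^ i ≤ 1 / (3 * ζ) * (1 + 6 * ζ) ^ K * m := by
  have hgeom : (∑ i ∈ Finset.range K, (1 + 6 * ζ) ^ i) * (6 * ζ) = (1 + 6 * ζ) ^ K - 1 := by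
    simpa using geom_sum_mul (1 + 6 * ζ) K
  have hsum : 0 ≤ ∑ i ∈ Finset.range K, (1 + 6 * ζ) ^ i := by positivity
  calc d * ∑ i ∈ Finset.range K, (1 + 6 * ζ) ^ i
      ≤ 2 * m * ∑ i ∈ Finset.range K, (1 + 6 * ζ) ^ i := by gcongr
    _ ≤ 1 / (3 * ζ) * (1 + 6 * ζ) ^ K * m := by
      rw [one_div_mul_eq_div, div_mul_eq_mul_div, le_div_iff₀ (by positivity)]
      nlinarith

theorem qsp_parametrization_stability_general {n : ℕ}
    (H : Matrix (Fin n) (Fin n) ℂ) (hH : H.IsHermitian)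
    (hHnorm : ‖Matrix.toEuclideanCLM (𝕜 := ℂ) H‖ ≤ 1)
    (K : ℕ) (hK : 1 ≤ K)
    (θ s θt st : ℕ → ℝ) (δs δθ : ℝ)
    (hδs : ∀ k < K, |s k - st k| ≤ δs) (hδθ : ∀ k < K, |θ k - θt k| ≤ δθ)
    (ζ : ℝ) (hζ : 0 < ζ)
    (hθζ : ∀ k < K, |θ k| ≤ ζ) (hsζ : ∀ k < K, |s k| ≤ ζ)
    (ψ ψt : ℕ → EuclideanSpace ℂ (Fin n))
    (hinit : ψ 0 = ψt 0) (hunit : ‖ψ 0‖ = 1)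
    (hψ : ∀ k < K, ψ (k + 1)
      = matApp (NormedSpace.exp ((Complex.I * (θ k : ℂ)) • outerProd (ψ k)))
          (matApp (NormedSpace.exp
              (((s k : ℝ) : ℂ) • (outerProd (ψ k) * H - H * outerProd (ψ k)))) (ψ k)))
    (hψt : ∀ k < K, ψt (k + 1)
      = matApp (NormedSpace.exp ((Complex.I * (θt k : ℂ)) • outerProd (ψt k)))
          (matApp (NormedSpace.exp
              (((st k : ℝ) : ℂ) • (outerProd (ψt k) * H - H * outerProd (ψt k)))) (ψt k))) :
    ‖ψ K - ψt K‖ ≤ (1 / (3 * ζ)) * (1 + 6 * ζ) ^ K * max δs δθ := by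
  have hHsa : IsSelfAdjoint (toEuclideanCLM (𝕜 := ℂ) H) := hH.isSelfAdjoint.map _
  have hrec k (hk : k < K) := (hψ k hk).trans (matApp_qsp_eq_qspStep H _ _ _)
  have hrect k (hk : k < K) := (hψt k hk).trans (matApp_qsp_eq_qspStep H _ _ _)
  have hstep : ∀ k < K, ‖ψ (k + 1) - ψt (k + 1)‖ ≤ (1 + 6 * ζ) * ‖ψ k - ψt k‖ + (δs + δθ) := by
    intro k hk
    have hψk : ‖ψ k‖ = 1 := by rw [norm_eq_norm_of_qsp_recursion hHsa hrec k hk.le, hunit]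
    have hψtk : ‖ψt k‖ = 1 := by
      rw [norm_eq_norm_of_qsp_recursion hHsa hrect k hk.le, ← hinit, hunit]
    rw [hrec k hk, hrect k hk]
    refine (norm_qspStep_sub_qspStep_le hHsa hHnorm hψk hψtk _ _ _ _).trans ?_
    nlinarith [hθζ k hk, hsζ k hk, hδs k hk, hδθ k hk, norm_nonneg (ψ k - ψt k)]
  have hm : 0 ≤ max δs δθ := (abs_nonneg _).trans ((hδs 0 hK).trans (le_max_left _ _))
  calc ‖ψ K - ψt K‖ ≤ (δs + δθ) * ∑ i ∈ Finset.range K, (1 + 6 * ζ) ^ i :=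
        le_mul_geom_sum_of_le_mul_add (a := fun k => ‖ψ k - ψt k‖) (by positivity)
          (by simp [hinit]) hstep
    _ ≤ 1 / (3 * ζ) * (1 + 6 * ζ) ^ K * max δs δθ :=
        mul_geom_sum_one_add_le hζ hm (by linarith [le_max_left δs δθ, le_max_right δs δθ]) K

/-- QSP parametrization stability: if the phases and durations are
perturbed by at most `δ_θ` and `δ_s` per step, then
`‖ψ_K − ψ̃_K‖ ≤ (1/(3ζ))·(1 + 6ζ)^K·max(δ_s, δ_θ)`. -/
theorem qsp_parametrization_stability {n : ℕ} (hn : 1 ≤ n)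
    (H : Matrix (Fin n) (Fin n) ℂ) (hH : H.IsHermitian)
    (hHnorm : ‖Matrix.toEuclideanCLM (𝕜 := ℂ) H‖ ≤ 1)
    (K : ℕ) (hK : 1 ≤ K)
    (θ s θt st : ℕ → ℝ) (δs δθ : ℝ)
    (hδs : ∀ k < K, |s k - st k| ≤ δs) (hδθ : ∀ k < K, |θ k - θt k| ≤ δθ)
    (ζ : ℝ) (hζ : 0 < ζ)
    (hθζ : ∀ k < K, |θ k| ≤ ζ) (hsζ : ∀ k < K, |s k| ≤ ζ)
    (ψ ψt : ℕ → EuclideanSpace ℂ (Fin n))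
    (hinit : ψ 0 = ψt 0) (hunit : ‖ψ 0‖ = 1)
    (hψ : ∀ k < K, ψ (k + 1)
      = matApp (NormedSpace.exp ((Complex.I * (θ k : ℂ)) • outerProd (ψ k)))
          (matApp (NormedSpace.exp
              (((s k : ℝ) : ℂ) • (outerProd (ψ k) * H - H * outerProd (ψ k)))) (ψ k)))
    (hψt : ∀ k < K, ψt (k + 1)
      = matApp (NormedSpace.exp ((Complex.I * (θt k : ℂ)) • outerProd (ψt k)))
          (matApp (NormedSpace.exp
              (((st k : ℝ) : ℂ) • (outerProd (ψt k) * H - H * outerProd (ψt k)))) (ψt k))) :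
    ‖ψ K - ψt K‖ ≤ (1 / (3 * ζ)) * (1 + 6 * ζ) ^ K * max δs δθ :=
  qsp_parametrization_stability_general H hH hHnorm K hK θ s θt st δs δθ hδs hδθ ζ hζ hθζ hsζ ψ ψt
    hinit hunit hψ hψt
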